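/- arXiv:2309.14059 — 8 statements merged into one kernel-verified Lean document; each statement's English description precedes it below -/
import Mathlib

section
/- Let h ∈ ℂ^L and x ∈ ℂ^N, and let x̃ ∈ ℂ^{N+P} be the cyclic-prefixed sequence obtained by prepending to x its own last P entries (x̃[m] = x[N−P+m] for 0 ≤ m ≤ P−1, x̃[m] = x[m−P] for P ≤ m ≤ N+P−1). Then T(h) x̃ = C(pad(h)) x = pad(h) ⊛ x; i.e., applying the linear (Toeplitz) channel to the cyclic-prefixed input and discarding prefix/tail yields exactly the cyclic convolution of the zero-padded impulse response with x. -/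
open Matrix

/-- The unitary `N`-point DFT matrix. -/
noncomputable def dft (N : ℕ) : Matrix (Fin N) (Fin N) ℂ :=
  Matrix.of fun k n : Fin N =>
    ((1 / Real.sqrt N : ℝ) : ℂ) *
      Complex.exp (-2 * (Real.pi : ℂ) * Complex.I * ((k : ℕ) : ℂ) * ((n : ℕ) : ℂ) / (N : ℂ))

/-- Cyclic convolution on `ℂ^N`. -/
noncomputable def cconv {N : ℕ} (c x : Fin N → ℂ) : Fin N → ℂ := fun n => ∑ m, c m * x (n - m)

/-- Zero-padding of `h ∈ ℂ^L` to length `N`. -/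
noncomputable def pad (N : ℕ) {L : ℕ} (hLN : L ≤ N) (h : Fin L → ℂ) : Fin N → ℂ :=
  fun n => if hn : (n : ℕ) < L then h ⟨n, hn⟩ else 0

/-- Toeplitz channel matrix `T(h) ∈ ℂ^{N×(N+P)}`. -/
noncomputable def toep (N : ℕ) {L : ℕ} (P : ℕ) (h : Fin L → ℂ) : Matrix (Fin N) (Fin (N + P)) ℂ :=
  Matrix.of fun (n : Fin N) (m : Fin (N + P)) =>
    if hk : 0 ≤ (P : ℤ) + (n : ℕ) - (m : ℕ) ∧ (P : ℤ) + (n : ℕ) - (m : ℕ) ≤ (L : ℤ) - 1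
    then h ⟨((P : ℤ) + (n : ℕ) - (m : ℕ)).toNat, by omega⟩ else 0

/-- First `P` columns of `T(h)`. -/
noncomputable def toepP (N : ℕ) {L : ℕ} (P : ℕ) (h : Fin L → ℂ) : Matrix (Fin N) (Fin P) ℂ :=
  Matrix.of fun n m => toep N P h n ⟨(m : ℕ), by have := m.isLt; omega⟩

/-- Last `N` entries of `w ∈ ℂ^{N+P}`. -/
noncomputable def wStar (N P : ℕ) (w : Fin (N + P) → ℂ) : Fin N → ℂ :=
  fun n => w ⟨P + (n : ℕ), by have := n.isLt; omega⟩

/-- First `P` entries of `w` minus the last `P` entries of `w*`. -/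
noncomputable def deltaP (N P : ℕ) (hPN : P ≤ N) (w : Fin (N + P) → ℂ) : Fin P → ℂ :=
  fun m => w ⟨(m : ℕ), by have := m.isLt; omega⟩ -
    wStar N P w ⟨N - P + (m : ℕ), by have := m.isLt; omega⟩

/-- Cyclic-prefixed sequence: prepend the last `P` entries of `x` to `x`. -/
noncomputable def cyclicPrefix (N P : ℕ) (hPN : P ≤ N) (x : Fin N → ℂ) : Fin (N + P) → ℂ :=
  fun m => if hm : (m : ℕ) < P then x ⟨N - P + (m : ℕ), by omega⟩
           else x ⟨(m : ℕ) - P, by have := m.isLt; omega⟩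

/-- Effective jammer channel matrix `𝗝[k] = [√N ĵ[k], R[k]]`. -/
noncomputable def effJ (N : ℕ) {L : ℕ} (P B : ℕ) (hLN : L ≤ N) (h : Fin B → Fin L → ℂ)
    (k : Fin N) : Matrix (Fin B) (Fin (P + 1)) ℂ :=
  Matrix.of fun b : Fin B =>
    Fin.cons ((Real.sqrt N : ℂ) * (dft N *ᵥ pad N hLN (h b)) k)
      (fun m : Fin P => Matrix.vecMul (dft N k) (toepP N P (h b)) m)

/-!
Row `n` of `T(h)` reads the input at the indices `P + n - k`, `k < L`, weighted by `h[k]`;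
since `k ≤ L - 1 ≤ P`, all of them lie in `x̃`, and the cyclic prefix is exactly what makes
`x̃[P + n - k] = x[(n - k) mod N]`, including when `k > n`.
-/

lemma toep_mulVec_apply {N L P : ℕ} (hLP : L ≤ P + 1) (h : Fin L → ℂ) (w : Fin (N + P) → ℂ)
    (n : Fin N) :
    (toep N P h *ᵥ w) n = ∑ k : Fin L, h k * w ⟨P + n - k, by omega⟩ := by
  symm
  refine Fintype.sum_of_injective (fun k : Fin L => (⟨P + n - k, by omega⟩ : Fin (N + P)))
    (fun k k' hkk' => Fin.ext (by simp only [Fin.mk.injEq] at hkk'; omega)) _ _ ?_ ?_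
  · rintro m hm
    have hout : ¬ (0 ≤ (P : ℤ) + n - m ∧ (P : ℤ) + n - m ≤ L - 1) := by
      rintro ⟨hlo, hhi⟩
      exact hm ⟨⟨P + n - m, by omega⟩, Fin.ext (by simp only; omega)⟩
    simp only [toep, of_apply, hout, dite_false, zero_mul]
  · intro k
    have hin : 0 ≤ (P : ℤ) + n - (P + n - k : ℕ) ∧ (P : ℤ) + n - (P + n - k : ℕ) ≤ L - 1 := by
      omega
    simp only [toep, of_apply, hin, and_self, dite_true]
    congr 2
    exact Fin.ext (by simp only; omega)

lemma cconv_pad_apply {N L : ℕ} (hLN : L ≤ N) (h : Fin L → ℂ) (x : Fin N → ℂ) (n : Fin N) :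
    cconv (pad N hLN h) x n = ∑ k : Fin L, h k * x (n - Fin.castLE hLN k) := by
  symm
  refine Fintype.sum_of_injective (Fin.castLE hLN) (Fin.castLE_injective hLN) _ _ ?_ ?_
  · rintro m hm
    have hout : ¬ (m : ℕ) < L := fun hmL => hm ⟨⟨m, hmL⟩, rfl⟩
    simp [pad, hout]
  · intro k
    simp [pad]

lemma cyclicPrefix_apply_sub {N P : ℕ} (hPN : P ≤ N) (x : Fin N → ℂ) (n k : Fin N)
    (hkP : (k : ℕ) ≤ P) :
    cyclicPrefix N P hPN x ⟨P + n - k, by omega⟩ = x (n - k) := by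
  rcases le_or_gt k n with hkn | hnk
  · have hsub := Fin.coe_sub_iff_le.mpr hkn
    simp only [cyclicPrefix, show ¬ P + (n : ℕ) - k < P by omega, dite_false]
    exact congrArg x (Fin.ext (by simp only; omega))
  · have hsub := Fin.coe_sub_iff_lt.mpr hnk
    simp only [cyclicPrefix, show P + (n : ℕ) - k < P by omega, dite_true]
    exact congrArg x (Fin.ext (by simp only; omega))

lemma circulant_mulVec_eq_cconv : ∀ {N : ℕ} (c x : Fin N → ℂ), circulant c *ᵥ x = cconv c x
  | 0, _, _ => Subsingleton.elim _ _
  | _ + 1, c, x => funext fun n =>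
      Fintype.sum_equiv (Equiv.subLeft n) _ _ fun m => by
        simp only [circulant_apply, Equiv.subLeft_apply, sub_sub_cancel, mul_comm]

theorem stmt3_general (N L P : ℕ) (hLN : L ≤ N) (hP : L - 1 ≤ P) (hPN : P ≤ N)
    (h : Fin L → ℂ) (x : Fin N → ℂ) :
    toep N P h *ᵥ cyclicPrefix N P hPN x = Matrix.circulant (pad N hLN h) *ᵥ x ∧
    toep N P h *ᵥ cyclicPrefix N P hPN x = cconv (pad N hLN h) x := by
  have hconv : toep N P h *ᵥ cyclicPrefix N P hPN x = cconv (pad N hLN h) x := by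
    funext n
    rw [toep_mulVec_apply (by omega), cconv_pad_apply]
    refine Finset.sum_congr rfl fun k _ => ?_
    exact congrArg (h k * ·)
      (cyclicPrefix_apply_sub hPN x n (Fin.castLE hLN k) (by rw [Fin.val_castLE]; omega))
  exact ⟨hconv.trans (circulant_mulVec_eq_cconv _ _).symm, hconv⟩

/-- Applying the Toeplitz channel to the cyclic-prefixed input yields the
cyclic convolution: `T(h) x̃ = C(pad(h)) x = pad(h) ⊛ x`. -/
theorem stmt3 (N L P : ℕ) (hL : 1 ≤ L) (hLN : L ≤ N) (hP : L - 1 ≤ P) (hPN : P ≤ N)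
    (h : Fin L → ℂ) (x : Fin N → ℂ) :
    toep N P h *ᵥ cyclicPrefix N P hPN x = Matrix.circulant (pad N hLN h) *ᵥ x ∧
    toep N P h *ᵥ cyclicPrefix N P hPN x = cconv (pad N hLN h) x :=
  stmt3_general N L P hLN hP hPN h x
end

section
/- Let h ∈ ℂ^L and s ∈ ℂ^N, set x = Fᴴ s, and let x̃ ∈ ℂ^{N+P} be the cyclic-prefixed sequence obtained by prepending to x its own last P entries. Then F · (T(h) x̃) = √N · diag(F pad(h)) · s; i.e., on each subcarrier k the receive signal equals √N (F pad(h))_k s_k, so the OFDM system splits into N orthogonal ISI-free scalar subcarriers. -/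
open Matrix

/-!
The cyclic prefix of length `P ≥ L - 1` makes the channel act on the transmitted block as circular
convolution with `pad h`: row `n` of `T(h)` only meets the entries `P + n - l` (`l < L`) of the
prefixed sequence, and these are `x` read at `n - l` modulo `N`. The rows of the DFT are the
characters `n ↦ ω ^ (k n)` of `ℤ/N` for `ω = exp (-2πi/N)`, so the DFT turns circular convolution
into `√N` times the pointwise product, and `F Fᴴ = 1` by orthogonality of these characters.
-/

open Complex

lemma pow_val_add_of_pow_eq_one {M : Type*} [Monoid M] {ρ : M} {N : ℕ} (hρ : ρ ^ N = 1)
    (a b : Fin N) : ρ ^ ((a + b : Fin N) : ℕ) = ρ ^ (a : ℕ) * ρ ^ (b : ℕ) := by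
  rw [Fin.val_add, ← pow_eq_pow_mod _ hρ, pow_add]

lemma sum_fin_pow_eq_zero {K : Type*} [DivisionRing K] {ρ : K} {N : ℕ} (hρ : ρ ^ N = 1)
    (hρ₁ : ρ ≠ 1) : ∑ n : Fin N, ρ ^ (n : ℕ) = 0 := by
  rw [Fin.sum_univ_eq_sum_range (ρ ^ ·), geom_sum_eq hρ₁, hρ, sub_self, zero_div]

noncomputable def dftRoot (N : ℕ) : ℂ := exp (-2 * Real.pi * I / N)

lemma isPrimitiveRoot_dftRoot (N : ℕ) [NeZero N] : IsPrimitiveRoot (dftRoot N) N := by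
  have h := (isPrimitiveRoot_exp N (NeZero.ne N)).inv
  rwa [← exp_neg, ← neg_div, ← neg_mul, ← neg_mul] at h

lemma star_dftRoot (N : ℕ) : star (dftRoot N) = (dftRoot N)⁻¹ := by
  rw [dftRoot, ← exp_neg, star_def, ← exp_conj]
  simp only [map_div₀, map_mul, map_neg, map_ofNat, conj_ofReal, conj_I, map_natCast]
  ring_nf

lemma dft_apply_eq_pow (N : ℕ) (k n : Fin N) :
    dft N k n = (Real.sqrt N : ℂ)⁻¹ * (dftRoot N ^ (k : ℕ)) ^ (n : ℕ) := by
  rw [dft, of_apply, dftRoot, ← exp_nat_mul, ← exp_nat_mul]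
  push_cast
  ring_nf

lemma inv_sqrt_mul_inv_sqrt (N : ℕ) : (Real.sqrt N : ℂ)⁻¹ * (Real.sqrt N : ℂ)⁻¹ = (N : ℂ)⁻¹ := by
  rw [← mul_inv, ← ofReal_mul, Real.mul_self_sqrt N.cast_nonneg, ofReal_natCast]

lemma dft_mul_conjTranspose (N : ℕ) : dft N * (dft N)ᴴ = 1 := by
  ext k k'
  have : NeZero N := ⟨k.pos.ne'⟩
  have hζ := isPrimitiveRoot_dftRoot N
  have hζ₀ : dftRoot N ≠ 0 := hζ.ne_zero (NeZero.ne N)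
  set ρ := dftRoot N ^ (k : ℕ) * (dftRoot N ^ (k' : ℕ))⁻¹
  have hρ : ρ ^ N = 1 := by
    rw [mul_pow, inv_pow, ← pow_mul, ← pow_mul, mul_comm _ N, mul_comm _ N, pow_mul, pow_mul,
      hζ.pow_eq_one]
    simp
  calc (dft N * (dft N)ᴴ) k k' = ∑ n : Fin N, (N : ℂ)⁻¹ * ρ ^ (n : ℕ) := by
        rw [mul_apply]
        refine Finset.sum_congr rfl fun n _ => ?_
        rw [conjTranspose_apply, dft_apply_eq_pow, dft_apply_eq_pow, star_mul', star_pow,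
          star_pow, star_dftRoot, star_inv₀, star_def, conj_ofReal, ← inv_sqrt_mul_inv_sqrt]
        ring
    _ = (1 : Matrix (Fin N) (Fin N) ℂ) k k' := by
        rw [← Finset.mul_sum, one_apply]
        split_ifs with hkk
        · simp [ρ, hkk, hζ₀]
        · rw [sum_fin_pow_eq_zero hρ, mul_zero]
          intro hρ₁
          exact hkk (Fin.ext (hζ.pow_inj k.isLt k'.isLt
            ((mul_inv_eq_one₀ (pow_ne_zero _ hζ₀)).mp hρ₁)))

lemma dft_apply_add (N : ℕ) (k m p : Fin N) :
    dft N k (m + p) = (Real.sqrt N : ℂ) * dft N k m * dft N k p := by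
  have : NeZero N := ⟨k.pos.ne'⟩
  have hsqrt : (Real.sqrt N : ℂ) ≠ 0 := by
    exact_mod_cast (Real.sqrt_pos.mpr (Nat.cast_pos.mpr k.pos)).ne'
  have hρ : (dftRoot N ^ (k : ℕ)) ^ N = 1 := by
    rw [← pow_mul, mul_comm, pow_mul, (isPrimitiveRoot_dftRoot N).pow_eq_one, one_pow]
  simp only [dft_apply_eq_pow, pow_val_add_of_pow_eq_one hρ]
  field_simp

theorem dft_mulVec_cconv (N : ℕ) (c x : Fin N → ℂ) (k : Fin N) :
    (dft N *ᵥ cconv c x) k = (Real.sqrt N : ℂ) * (dft N *ᵥ c) k * (dft N *ᵥ x) k := by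
  have : NeZero N := ⟨k.pos.ne'⟩
  simp only [mulVec, dotProduct, cconv]
  calc ∑ n, dft N k n * ∑ m, c m * x (n - m)
      = ∑ m, ∑ n, dft N k n * (c m * x (n - m)) := by
        simp only [Finset.mul_sum]
        exact Finset.sum_comm
    _ = ∑ m, ∑ p, dft N k (m + p) * (c m * x p) := Finset.sum_congr rfl fun m _ =>
        (Fintype.sum_equiv (Equiv.addLeft m) _ _ fun p => by simp).symm
    _ = (Real.sqrt N : ℂ) * (∑ m, dft N k m * c m) * ∑ p, dft N k p * x p := by
        rw [mul_assoc, Finset.sum_mul_sum, Finset.mul_sum]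
        refine Finset.sum_congr rfl fun m _ => ?_
        rw [Finset.mul_sum]
        refine Finset.sum_congr rfl fun p _ => ?_
        rw [dft_apply_add]
        ring

lemma val_sub_add_modEq {N : ℕ} (P : ℕ) (n m : Fin N) (hm : (m : ℕ) ≤ P) :
    ((n - m : Fin N) : ℕ) + P ≡ P + n - m [MOD N] := by
  rw [Fin.val_sub]
  calc (N - m + n) % N + P ≡ N - m + n + P [MOD N] := (Nat.mod_modEq _ _).add_right P
    _ = P + n - m + N := by omega
    _ ≡ P + n - m [MOD N] := Nat.add_mod_right _ _

lemma cyclicPrefix_apply_of_modEq (N P : ℕ) (hPN : P ≤ N) (x : Fin N → ℂ) {j : Fin (N + P)}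
    {i : Fin N} (hij : (i : ℕ) + P ≡ j [MOD N]) : cyclicPrefix N P hPN x j = x i := by
  unfold cyclicPrefix
  split_ifs with hj
  · congr 1
    ext
    refine Nat.ModEq.eq_of_lt_of_lt ?_ (by omega) i.isLt
    calc N - P + (j : ℕ) ≡ N - P + ((i : ℕ) + P) [MOD N] := hij.symm.add_left _
      _ = (i : ℕ) + N := by omega
      _ ≡ i [MOD N] := Nat.add_mod_right _ _
  · congr 1
    ext
    refine Nat.ModEq.eq_of_lt_of_lt (Nat.ModEq.add_right_cancel' P ?_) (by omega) i.isLt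
    rw [Nat.sub_add_cancel (not_lt.mp hj)]
    exact hij.symm

lemma toep_apply_of_add_eq (N P : ℕ) {L : ℕ} (h : Fin L → ℂ) {n : Fin N} {m : Fin (N + P)}
    {l : Fin L} (hml : (m : ℕ) + l = P + n) : toep N P h n m = h l := by
  rw [toep, of_apply, dif_pos (by omega)]
  congr 1
  ext
  dsimp only
  omega

lemma toep_apply_eq_zero (N P : ℕ) {L : ℕ} (h : Fin L → ℂ) {n : Fin N} {m : Fin (N + P)}
    (hm : ∀ l : Fin L, (m : ℕ) + l ≠ P + n) : toep N P h n m = 0 := by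
  rw [toep, of_apply, dif_neg]
  rintro ⟨h0, hL⟩
  exact hm ⟨_, show ((P : ℤ) + n - m).toNat < L by omega⟩ (by simp only; omega)

lemma pad_castLE (N : ℕ) {L : ℕ} (hLN : L ≤ N) (h : Fin L → ℂ) (l : Fin L) :
    pad N hLN h (Fin.castLE hLN l) = h l := by
  simp [pad]

lemma pad_apply_eq_zero (N : ℕ) {L : ℕ} (hLN : L ≤ N) (h : Fin L → ℂ) {n : Fin N}
    (hn : L ≤ n) : pad N hLN h n = 0 := by
  simp [pad, not_lt.mpr hn]

theorem toep_mulVec_cyclicPrefix (N L P : ℕ) (hLN : L ≤ N) (hP : L - 1 ≤ P) (hPN : P ≤ N)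
    (h : Fin L → ℂ) (x : Fin N → ℂ) :
    toep N P h *ᵥ cyclicPrefix N P hPN x = cconv (pad N hLN h) x := by
  funext n
  have hl (l : Fin L) : (l : ℕ) ≤ P := by omega
  -- `tap l` is the column of row `n` of `T(h)` that carries `h l`.
  let tap (l : Fin L) : Fin (N + P) := ⟨P + n - l, by omega⟩
  calc (toep N P h *ᵥ cyclicPrefix N P hPN x) n
      = ∑ l : Fin L, h l * x (n - Fin.castLE hLN l) := by
        refine (Fintype.sum_of_injective tap (fun a b hab => ?_) _ _ (fun m hm => ?_)
          (fun l => ?_)).symm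
        · have := congrArg Fin.val hab
          simp only [tap] at this
          omega
        · beta_reduce
          rw [toep_apply_eq_zero, zero_mul]
          intro l hml
          exact hm ⟨l, Fin.ext (by simp only [tap]; omega)⟩
        · beta_reduce
          have hcol : ((tap l : Fin (N + P)) : ℕ) + l = P + n := by simp only [tap]; omega
          rw [toep_apply_of_add_eq N P h hcol, cyclicPrefix_apply_of_modEq N P hPN x
            (val_sub_add_modEq P n (Fin.castLE hLN l) (hl l))]
    _ = cconv (pad N hLN h) x n :=
        Fintype.sum_of_injective (Fin.castLE hLN) (Fin.castLE_injective hLN) _ _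
          (fun m hm => by
            rw [pad_apply_eq_zero N hLN h (not_lt.mp fun hmL => hm ⟨⟨m, hmL⟩, rfl⟩), zero_mul])
          (fun l => by rw [pad_castLE])

theorem stmt4_general (N L P : ℕ) (hLN : L ≤ N) (hP : L - 1 ≤ P) (hPN : P ≤ N)
    (h : Fin L → ℂ) (s : Fin N → ℂ) :
    dft N *ᵥ (toep N P h *ᵥ cyclicPrefix N P hPN ((dft N)ᴴ *ᵥ s)) =
      fun k => (Real.sqrt N : ℂ) * (dft N *ᵥ pad N hLN h) k * s k := by
  funext k
  rw [toep_mulVec_cyclicPrefix N L P hLN hP hPN, dft_mulVec_cconv, mulVec_mulVec,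
    dft_mul_conjTranspose, one_mulVec]

/-- OFDM: with `x = Fᴴ s` and cyclic prefix, the received OFDM symbol after
DFT equals `√N · diag(F pad(h)) · s`, i.e. `N` orthogonal ISI-free scalar subcarriers. -/
theorem stmt4 (N L P : ℕ) (hL : 1 ≤ L) (hLN : L ≤ N) (hP : L - 1 ≤ P) (hPN : P ≤ N)
    (h : Fin L → ℂ) (s : Fin N → ℂ) :
    dft N *ᵥ (toep N P h *ᵥ cyclicPrefix N P hPN ((dft N)ᴴ *ᵥ s)) =
      fun k => (Real.sqrt N : ℂ) * (dft N *ᵥ pad N hLN h) k * s k :=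
  stmt4_general N L P hLN hP hPN h s
end

section
/- Let h ∈ ℂ^L and w ∈ ℂ^{N+P}, with w^(p) ∈ ℂ^P its first P entries and w* ∈ ℂ^N its last N entries, and let Δ^(p)(w) ∈ ℂ^P be w^(p) minus the vector of the last P entries of w*. Then T(h) w = C(pad(h)) w* + T^(p)(h) Δ^(p)(w). -/
open Matrix

private lemma sumSplit (A B : ℕ) (f : Fin (A + B) → ℂ) :
    ∑ i, f i = (∑ i : Fin A, f ⟨i, by omega⟩) + ∑ j : Fin B, f ⟨A + (j : ℕ), by omega⟩ := by
  rw [Fin.sum_univ_add]; rfl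

private lemma key (N L P : ℕ) (hL : 1 ≤ L) (hLN : L ≤ N) (hP : L - 1 ≤ P) (hPN : P ≤ N)
    (h : Fin L → ℂ) (n j : Fin N) :
    Matrix.circulant (pad N hLN h) n j =
      toep N P h n ⟨P + (j:ℕ), by omega⟩ +
        (if N - P ≤ (j:ℕ) then toep N P h n ⟨(j:ℕ) - (N - P), by have := j.isLt; omega⟩ else 0) := by
  have hj := j.isLt; have hn := n.isLt
  rw [Matrix.circulant_apply, Fin.sub_def]
  simp only [pad, toep, Matrix.of_apply]
  rcases le_or_gt (j:ℕ) (n:ℕ) with hc | hc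
  · have hv : (N - (j:ℕ) + (n:ℕ)) % N = (n:ℕ) - (j:ℕ) := by
      have : N - (j:ℕ) + (n:ℕ) = ((n:ℕ) - (j:ℕ)) + N := by omega
      rw [this, Nat.add_mod_right, Nat.mod_eq_of_lt (by omega)]
    simp only [hv]
    split_ifs <;>
      first
        | (exfalso; omega)
        | (rw [add_zero]; refine congrArg h (Fin.ext ?_); push_cast; omega)
        | (rw [zero_add]; refine congrArg h (Fin.ext ?_); push_cast; omega)
        | rw [add_zero]
        | rw [zero_add]
  · have hv : (N - (j:ℕ) + (n:ℕ)) % N = N - (j:ℕ) + (n:ℕ) := Nat.mod_eq_of_lt (by omega)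
    simp only [hv]
    split_ifs <;>
      first
        | (exfalso; omega)
        | (rw [add_zero]; refine congrArg h (Fin.ext ?_); push_cast; omega)
        | (rw [zero_add]; refine congrArg h (Fin.ext ?_); push_cast; omega)
        | rw [add_zero]
        | rw [zero_add]

/-- Decomposition of the prefix-free channel output:
`T(h) w = C(pad(h)) w* + T⁽ᵖ⁾(h) Δ⁽ᵖ⁾(w)`. -/
theorem stmt6 (N L P : ℕ) (hL : 1 ≤ L) (hLN : L ≤ N) (hP : L - 1 ≤ P) (hPN : P ≤ N)
    (h : Fin L → ℂ) (w : Fin (N + P) → ℂ) :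
    toep N P h *ᵥ w =
      Matrix.circulant (pad N hLN h) *ᵥ wStar N P w + toepP N P h *ᵥ deltaP N P hPN w := by
  funext n
  simp only [Matrix.mulVec, dotProduct, Pi.add_apply]
  have e1 : ∑ m : Fin (N + P), toep N P h n m * w m
      = ∑ m : Fin (P + N), toep N P h n (Fin.cast (by omega) m) * w (Fin.cast (by omega) m) :=
    (Fintype.sum_equiv (finCongr (by omega : P + N = N + P)) _ _ fun _ => rfl).symm
  rw [e1, sumSplit P N]
  simp only [deltaP, mul_sub, Finset.sum_sub_distrib]
  have eA : (∑ i : Fin P,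
        toep N P h n (Fin.cast (by omega) (⟨(i:ℕ), by omega⟩ : Fin (P + N))) *
          w (Fin.cast (by omega) (⟨(i:ℕ), by omega⟩ : Fin (P + N))))
      = ∑ m : Fin P, toepP N P h n m * w ⟨(m:ℕ), by have := m.isLt; omega⟩ := by
    refine Finset.sum_congr rfl fun m _ => ?_
    congr 1
  have eB : (∑ j : Fin N,
        toep N P h n (Fin.cast (by omega) (⟨P + (j:ℕ), by omega⟩ : Fin (P + N))) *
          w (Fin.cast (by omega) (⟨P + (j:ℕ), by omega⟩ : Fin (P + N))))
      = ∑ j : Fin N, toep N P h n ⟨P + (j:ℕ), by have := j.isLt; omega⟩ * wStar N P w j := by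
    refine Finset.sum_congr rfl fun j _ => ?_
    rfl
  rw [eA, eB]
  have eC : ∑ j : Fin N, Matrix.circulant (pad N hLN h) n j * wStar N P w j
      = (∑ j : Fin N, toep N P h n ⟨P + (j:ℕ), by have := j.isLt; omega⟩ * wStar N P w j)
        + ∑ j : Fin N,
            (if N - P ≤ (j:ℕ) then toep N P h n ⟨(j:ℕ) - (N - P), by have := j.isLt; omega⟩ else 0)
              * wStar N P w j := by
    rw [← Finset.sum_add_distrib]
    refine Finset.sum_congr rfl fun j _ => ?_
    rw [key N L P hL hLN hP hPN h n j, add_mul]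
  have eD : (∑ j : Fin N,
        (if N - P ≤ (j:ℕ) then toep N P h n ⟨(j:ℕ) - (N - P), by have := j.isLt; omega⟩ else 0)
          * wStar N P w j)
      = ∑ m : Fin P, toepP N P h n m * wStar N P w ⟨N - P + (m:ℕ), by have := m.isLt; omega⟩ := by
    have e2 : (∑ j : Fin N,
          (if N - P ≤ (j:ℕ) then toep N P h n ⟨(j:ℕ) - (N - P), by have := j.isLt; omega⟩ else 0)
            * wStar N P w j)
        = ∑ j : Fin (N - P + P), (fun j : Fin N =>
            (if N - P ≤ (j:ℕ) then toep N P h n ⟨(j:ℕ) - (N - P), by have := j.isLt; omega⟩ else 0)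
              * wStar N P w j) (Fin.cast (by omega) j) :=
      (Fintype.sum_equiv (finCongr (by omega : N - P + P = N)) _ _ fun _ => rfl).symm
    rw [e2, sumSplit (N - P) P]
    have z1 : (∑ i : Fin (N - P), (fun j : Fin N =>
          (if N - P ≤ (j:ℕ) then toep N P h n ⟨(j:ℕ) - (N - P), by have := j.isLt; omega⟩ else 0)
            * wStar N P w j) (Fin.cast (by omega) (⟨(i:ℕ), by omega⟩ : Fin (N - P + P)))) = 0 := by
      refine Finset.sum_eq_zero fun i _ => ?_
      have := i.isLt
      simp only [Fin.cast_mk]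
      rw [if_neg (by simp; omega), zero_mul]
    rw [z1, zero_add]
    refine Finset.sum_congr rfl fun m _ => ?_
    have hm := m.isLt
    simp only [Fin.cast_mk]
    rw [if_pos (by omega)]
    congr 1
    all_goals
      first
        | rfl
        | (simp only [toepP, Matrix.of_apply]; exact congrArg _ (Fin.ext (by simp only [Fin.val_mk]; omega)))
  rw [eC, eD]
  ring
end

section
/- Let h_1,…,h_B ∈ ℂ^L be the jammer's impulse responses to the B receive antennas and let w ∈ ℂ^{N+P}. For every subcarrier k ∈ {0,…,N−1}, the stacked per-subcarrier receive vector ŷ[k] ∈ ℂ^B with entries ŷ[k]_b = (F · T(h_b) w)_k satisfies ŷ[k] = √N · ĵ[k] · (F w*)_k + R[k] · Δ^(p)(w) = 𝗝[k] · [(F w*)_k ; Δ^(p)(w)], where ĵ[k] ∈ ℂ^B has entries ĵ[k]_b = (F pad(h_b))_k, R[k] ∈ ℂ^{B×P} has b-th row equal to the k-th row of F multiplied by T^(p)(h_b), and 𝗝[k] = [√N ĵ[k], R[k]] ∈ ℂ^{B×(P+1)}. -/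
open Matrix

lemma exp_mod {N : ℕ} (hN : 1 ≤ N) (k : Fin N) (t : ℕ) :
    Complex.exp (-2 * (Real.pi : ℂ) * Complex.I * ((k : ℕ) : ℂ) * ((t % N : ℕ) : ℂ) / (N : ℂ)) =
    Complex.exp (-2 * (Real.pi : ℂ) * Complex.I * ((k : ℕ) : ℂ) * ((t : ℕ) : ℂ) / (N : ℂ)) := by
  have hNC : (N : ℂ) ≠ 0 := Nat.cast_ne_zero.mpr (by omega)
  obtain ⟨q, r, hr, ht, hmod⟩ : ∃ q r : ℕ, r = t % N ∧ t = N * q + r ∧ r = t % N :=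
    ⟨t / N, t % N, rfl, (Nat.div_add_mod t N).symm, rfl⟩
  rw [← hr, ht]
  have harg : -2 * (Real.pi : ℂ) * Complex.I * ((k : ℕ) : ℂ) * (((N * q + r : ℕ)) : ℂ) / (N : ℂ)
      = -2 * (Real.pi : ℂ) * Complex.I * ((k : ℕ) : ℂ) * ((r : ℕ) : ℂ) / (N : ℂ)
        + ((-((k : ℕ) * q : ℕ) : ℤ) : ℂ) * (2 * (Real.pi : ℂ) * Complex.I) := by
    push_cast
    field_simp
    ring
  rw [harg, Complex.exp_add, Complex.exp_int_mul_two_pi_mul_I, mul_one]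

lemma dft_add {N : ℕ} (hN : 1 ≤ N) (k a b : Fin N) :
    dft N k (a + b) = ((Real.sqrt N : ℝ) : ℂ) * dft N k a * dft N k b := by
  have hs : Real.sqrt N ≠ 0 := by positivity
  have hc : ((Real.sqrt N : ℝ) : ℂ) * ((1 / Real.sqrt N : ℝ) : ℂ) = 1 := by
    rw [← Complex.ofReal_mul, mul_one_div, div_self hs, Complex.ofReal_one]
  simp only [dft, Matrix.of_apply]
  have hval : (((a + b : Fin N) : ℕ) : ℂ) = (((a.val + b.val) % N : ℕ) : ℂ) := by
    norm_cast
  rw [hval, exp_mod hN k]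
  have hsplit : Complex.exp (-2 * (Real.pi : ℂ) * Complex.I * ((k : ℕ) : ℂ) * (((a.val + b.val : ℕ)) : ℂ) / (N : ℂ))
      = Complex.exp (-2 * (Real.pi : ℂ) * Complex.I * ((k : ℕ) : ℂ) * ((a : ℕ) : ℂ) / (N : ℂ))
        * Complex.exp (-2 * (Real.pi : ℂ) * Complex.I * ((k : ℕ) : ℂ) * ((b : ℕ) : ℂ) / (N : ℂ)) := by
    rw [← Complex.exp_add]
    congr 1
    push_cast
    ring
  rw [hsplit]
  set Ea := Complex.exp (-2 * (Real.pi : ℂ) * Complex.I * ((k : ℕ) : ℂ) * ((a : ℕ) : ℂ) / (N : ℂ)) with hEa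
  set Eb := Complex.exp (-2 * (Real.pi : ℂ) * Complex.I * ((k : ℕ) : ℂ) * ((b : ℕ) : ℂ) / (N : ℂ)) with hEb
  linear_combination (-(((1 / Real.sqrt N : ℝ) : ℂ) * Ea * Eb)) * hc

lemma dft_cconv {N : ℕ} (hN : 1 ≤ N) (c x : Fin N → ℂ) (k : Fin N) :
    (dft N *ᵥ cconv c x) k = ((Real.sqrt N : ℝ) : ℂ) * (dft N *ᵥ c) k * (dft N *ᵥ x) k := by
  haveI : NeZero N := ⟨by omega⟩
  show ∑ n, dft N k n * cconv c x n
      = ((Real.sqrt N : ℝ) : ℂ) * (∑ n, dft N k n * c n) * (∑ n, dft N k n * x n)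
  calc ∑ n, dft N k n * cconv c x n
      = ∑ n, ∑ m, dft N k n * (c m * x (n - m)) := by
        simp [cconv, Finset.mul_sum]
    _ = ∑ m, ∑ n, dft N k n * (c m * x (n - m)) := Finset.sum_comm
    _ = ∑ m, ∑ j, dft N k (j + m) * (c m * x j) := by
        refine Finset.sum_congr rfl fun m _ => ?_
        refine (Fintype.sum_equiv (Equiv.addRight m) _ _ fun j => ?_).symm
        rw [Equiv.coe_addRight, add_sub_cancel_right]
    _ = ∑ m, ∑ j, (((Real.sqrt N : ℝ) : ℂ) * dft N k j * dft N k m) * (c m * x j) := by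
        refine Finset.sum_congr rfl fun m _ => Finset.sum_congr rfl fun j _ => ?_
        rw [dft_add hN]
    _ = ((Real.sqrt N : ℝ) : ℂ) * (∑ n, dft N k n * c n) * (∑ n, dft N k n * x n) := by
        conv_rhs => rw [mul_assoc, Finset.sum_mul_sum, Finset.mul_sum]
        refine Finset.sum_congr rfl fun m _ => ?_
        rw [Finset.mul_sum]
        exact Finset.sum_congr rfl fun j _ => by ring

lemma fin_sub_val {N : ℕ} (a b : Fin N) :
    ((a - b : Fin N) : ℕ) = if (b : ℕ) ≤ (a : ℕ) then (a : ℕ) - (b : ℕ) else (a : ℕ) + N - (b : ℕ) := by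
  have hz := Fin.coe_int_sub_eq_ite a b
  have hb : b ≤ a ↔ (b : ℕ) ≤ (a : ℕ) := Iff.rfl
  split_ifs with hle
  · rw [if_pos (hb.mpr hle)] at hz
    omega
  · rw [if_neg (fun hc => hle (hb.mp hc))] at hz
    have := a.isLt; have := b.isLt
    omega

lemma key_decomp {N L P : ℕ} (hL : 1 ≤ L) (hLN : L ≤ N) (hP : L - 1 ≤ P) (hPN : P ≤ N)
    (h : Fin L → ℂ) (w : Fin (N + P) → ℂ) (n : Fin N) :
    (toep N P h *ᵥ w) n =
      cconv (pad N hLN h) (wStar N P w) n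
        + ∑ m : Fin P, toepP N P h n m * deltaP N P hPN w m := by
  haveI : NeZero N := ⟨by omega⟩
  classical
  set hh : ℕ → ℂ := fun i => if hi : i < L then h ⟨i, hi⟩ else 0 with hhh
  set ww : ℕ → ℂ := fun i => if hi : i < N + P then w ⟨i, hi⟩ else 0 with hww
  set t : ℕ → ℂ := fun i => if i ≤ P + (n : ℕ) then hh (P + (n : ℕ) - i) else 0 with ht
  have hh_zero : ∀ i, L ≤ i → hh i = 0 := fun i hi => by
    rw [hhh]; exact dif_neg (by omega)
  have hw : ∀ m : Fin (N + P), w m = ww (m : ℕ) := fun m => by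
    rw [hww]; simp only; rw [dif_pos m.isLt]
  have hws : ∀ j : Fin N, wStar N P w j = ww (P + (j : ℕ)) := fun j => by
    rw [hww, wStar]; simp only
    rw [dif_pos (by omega : P + (j : ℕ) < N + P)]
  have htoep : ∀ m : Fin (N + P), toep N P h n m = t (m : ℕ) := by
    intro m
    simp only [toep, ht, hhh, Matrix.of_apply]
    rcases Classical.em ((m : ℕ) ≤ P + (n : ℕ)) with h2 | h2
    · rw [if_pos h2]
      rcases Classical.em (P + (n : ℕ) - (m : ℕ) < L) with h3 | h3
      · rw [dif_pos h3, dif_pos (⟨by omega, by omega⟩ :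
          (0 : ℤ) ≤ (P : ℤ) + (n : ℕ) - (m : ℕ) ∧ (P : ℤ) + (n : ℕ) - (m : ℕ) ≤ (L : ℤ) - 1)]
        exact congrArg h (Fin.ext (show ((P : ℤ) + ((n : ℕ) : ℤ) - ((m : ℕ) : ℤ)).toNat
            = P + (n : ℕ) - (m : ℕ) from by omega))
      · rw [dif_neg h3, dif_neg (fun hz => h3 (by omega))]
    · rw [if_neg h2, dif_neg (fun hz => h2 (by omega))]
  -- LHS as range sum
  have hLHS : (toep N P h *ᵥ w) n = ∑ i ∈ Finset.range (N + P), t i * ww i := by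
    show ∑ m : Fin (N + P), toep N P h n m * w m = _
    rw [← Fin.sum_univ_eq_sum_range (fun i => t i * ww i)]
    exact Finset.sum_congr rfl fun m _ => by rw [htoep m, hw m]
  -- cconv as range sum
  have hCC : cconv (pad N hLN h) (wStar N P w) n
      = ∑ j ∈ Finset.range N,
          hh (if j ≤ (n : ℕ) then (n : ℕ) - j else (n : ℕ) + N - j) * ww (P + j) := by
    rw [cconv]
    rw [show (∑ m : Fin N, pad N hLN h m * wStar N P w (n - m))
        = ∑ j : Fin N, pad N hLN h (n - j) * wStar N P w j from
      Fintype.sum_equiv (Equiv.subLeft n) _ _ fun j => by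
        rw [Equiv.subLeft_apply, sub_sub_cancel]]
    rw [← Fin.sum_univ_eq_sum_range
      (fun j => hh (if j ≤ (n : ℕ) then (n : ℕ) - j else (n : ℕ) + N - j) * ww (P + j))]
    refine Finset.sum_congr rfl fun j _ => ?_
    rw [hws j]
    congr 1
    show pad N hLN h (n - j) = _
    simp only [pad, hhh]
    rw [fin_sub_val]
  -- delta sum as range sum
  have hDS : (∑ m : Fin P, toepP N P h n m * deltaP N P hPN w m)
      = ∑ i ∈ Finset.range P, t i * (ww i - ww (N + i)) := by
    rw [← Fin.sum_univ_eq_sum_range (fun i => t i * (ww i - ww (N + i)))]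
    refine Finset.sum_congr rfl fun m _ => ?_
    have h1 : toepP N P h n m = t (m : ℕ) := by
      rw [toepP]; simp only [Matrix.of_apply]
      exact htoep _
    have h2 : deltaP N P hPN w m = ww (m : ℕ) - ww (N + (m : ℕ)) := by
      rw [deltaP, hw, hws]
      simp only
      congr 2
      omega
    rw [h1, h2]
  rw [hLHS, hCC, hDS]
  -- now a pure range-sum identity
  have hsplit : ∑ i ∈ Finset.range (N + P), t i * ww i
      = (∑ i ∈ Finset.range P, t i * ww i) + ∑ j ∈ Finset.range N, t (P + j) * ww (P + j) := by
    rw [← Finset.sum_range_add_sum_Ico (fun i => t i * ww i) (by omega : P ≤ N + P),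
      Finset.sum_Ico_eq_sum_range, show N + P - P = N from by omega]
  rw [hsplit]
  have hdelta : ∑ i ∈ Finset.range P, t i * (ww i - ww (N + i))
      = (∑ i ∈ Finset.range P, t i * ww i) - ∑ i ∈ Finset.range P, t i * ww (N + i) := by
    rw [← Finset.sum_sub_distrib]
    exact Finset.sum_congr rfl fun i _ => by ring
  rw [hdelta]
  -- reindex the second range-P sum into Ico (N-P) N
  have hreidx : ∑ i ∈ Finset.range P, t i * ww (N + i)
      = ∑ j ∈ Finset.Ico (N - P) N, t (j - (N - P)) * ww (P + j) := by
    refine Eq.symm ?_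
    rw [Finset.sum_Ico_eq_sum_range, show N - (N - P) = P from by omega]
    refine Finset.sum_congr rfl fun i hi => ?_
    have hiP : i < P := Finset.mem_range.mp hi
    rw [show N - P + i - (N - P) = i from by omega, show P + (N - P + i) = N + i from by omega]
  -- extend Ico sum to range N with an indicator
  have hext : ∑ j ∈ Finset.Ico (N - P) N, t (j - (N - P)) * ww (P + j)
      = ∑ j ∈ Finset.range N,
          (if N - P ≤ j then t (j - (N - P)) * ww (P + j) else 0) := by
    rw [Finset.range_eq_Ico]
    rw [← Finset.sum_Ico_consecutive _ (Nat.zero_le (N - P)) (by omega : N - P ≤ N)]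
    have hz : ∑ j ∈ Finset.Ico 0 (N - P),
        (if N - P ≤ j then t (j - (N - P)) * ww (P + j) else 0) = 0 := by
      refine Finset.sum_eq_zero fun j hj => ?_
      rw [if_neg]
      have := Finset.mem_Ico.mp hj
      omega
    rw [hz, zero_add]
    refine Finset.sum_congr rfl fun j hj => ?_
    rw [if_pos (Finset.mem_Ico.mp hj).1]
  rw [hreidx, hext]
  -- pointwise identity on range N
  have hpoint : ∀ j ∈ Finset.range N,
      hh (if j ≤ (n : ℕ) then (n : ℕ) - j else (n : ℕ) + N - j) * ww (P + j)
        = t (P + j) * ww (P + j)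
          + (if N - P ≤ j then t (j - (N - P)) * ww (P + j) else 0) := by
    intro j hj
    have hjN : j < N := Finset.mem_range.mp hj
    have hnN : (n : ℕ) < N := n.isLt
    have key : hh (if j ≤ (n : ℕ) then (n : ℕ) - j else (n : ℕ) + N - j)
        = t (P + j) + (if N - P ≤ j then t (j - (N - P)) else 0) := by
      rw [ht]
      simp only
      by_cases h1 : j ≤ (n : ℕ)
      · rw [if_pos h1, if_pos (by omega : P + j ≤ P + (n : ℕ))]
        have hz2 : (if N - P ≤ j then
            (if j - (N - P) ≤ P + (n : ℕ) then hh (P + (n : ℕ) - (j - (N - P))) else 0) else 0)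
            = 0 := by
          split_ifs with ha hb
          · exact hh_zero _ (by omega)
          · rfl
          · rfl
        rw [hz2, add_zero]
        congr 1
        omega
      · rw [if_neg h1, if_neg (by omega : ¬ P + j ≤ P + (n : ℕ)), zero_add]
        by_cases h2 : N - P ≤ j
        · rw [if_pos h2, if_pos (by omega : j - (N - P) ≤ P + (n : ℕ))]
          congr 1
          omega
        · rw [if_neg h2]
          exact hh_zero _ (by omega)
    rw [key, add_mul]
    congr 1
    split_ifs with h2
    · rfl
    · rw [zero_mul]
  rw [Finset.sum_congr rfl hpoint, Finset.sum_add_distrib]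
  ring

/-- Per-subcarrier receive vector of a cyclic-prefix-violating jammer:
`ŷ[k] = √N ĵ[k] (F w*)_k + R[k] Δ⁽ᵖ⁾(w) = 𝗝[k] [(F w*)_k ; Δ⁽ᵖ⁾(w)]`. -/
theorem stmt7 (N L P B : ℕ) (hL : 1 ≤ L) (hLN : L ≤ N) (hP : L - 1 ≤ P) (hPN : P ≤ N)
    (hB : 1 ≤ B) (h : Fin B → Fin L → ℂ) (w : Fin (N + P) → ℂ) (k : Fin N) :
    (fun b : Fin B => (dft N *ᵥ (toep N P (h b) *ᵥ w)) k) =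
      (fun b : Fin B =>
        (Real.sqrt N : ℂ) * (dft N *ᵥ pad N hLN (h b)) k * (dft N *ᵥ wStar N P w) k
          + Matrix.vecMul (dft N k) (toepP N P (h b)) ⬝ᵥ deltaP N P hPN w) ∧
    (fun b : Fin B => (dft N *ᵥ (toep N P (h b) *ᵥ w)) k) =
      effJ N P B hLN h k *ᵥ Fin.cons ((dft N *ᵥ wStar N P w) k) (deltaP N P hPN w) := by
  have hN : 1 ≤ N := le_trans hL hLN
  have main : (fun b : Fin B => (dft N *ᵥ (toep N P (h b) *ᵥ w)) k) =
      (fun b : Fin B =>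
        (Real.sqrt N : ℂ) * (dft N *ᵥ pad N hLN (h b)) k * (dft N *ᵥ wStar N P w) k
          + Matrix.vecMul (dft N k) (toepP N P (h b)) ⬝ᵥ deltaP N P hPN w) := by
    funext b
    have step1 : (dft N *ᵥ (toep N P (h b) *ᵥ w)) k
        = (dft N *ᵥ cconv (pad N hLN (h b)) (wStar N P w)) k
          + ∑ n, dft N k n * ∑ m : Fin P, toepP N P (h b) n m * deltaP N P hPN w m := by
      show ∑ n, dft N k n * (toep N P (h b) *ᵥ w) n = _
      rw [show (dft N *ᵥ cconv (pad N hLN (h b)) (wStar N P w)) k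
          = ∑ n, dft N k n * cconv (pad N hLN (h b)) (wStar N P w) n from rfl,
        ← Finset.sum_add_distrib]
      refine Finset.sum_congr rfl fun n _ => ?_
      rw [key_decomp hL hLN hP hPN (h b) w n, mul_add]
    have step2 : ∑ n, dft N k n * ∑ m : Fin P, toepP N P (h b) n m * deltaP N P hPN w m
        = Matrix.vecMul (dft N k) (toepP N P (h b)) ⬝ᵥ deltaP N P hPN w := by
      simp only [Matrix.vecMul, dotProduct, Finset.mul_sum, Finset.sum_mul]
      rw [Finset.sum_comm]
      exact Finset.sum_congr rfl fun m _ => Finset.sum_congr rfl fun n _ => by ring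
    rw [step1, step2, dft_cconv hN]
  refine ⟨main, main.trans ?_⟩
  funext b
  rw [show (effJ N P B hLN h k *ᵥ
        (Fin.cons ((dft N *ᵥ wStar N P w) k) (deltaP N P hPN w) : Fin (P + 1) → ℂ)) b
      = ∑ i : Fin (P + 1), effJ N P B hLN h k b i
          * (Fin.cons ((dft N *ᵥ wStar N P w) k) (deltaP N P hPN w) : Fin (P + 1) → ℂ) i
      from rfl]
  rw [Fin.sum_univ_succ]
  simp only [effJ, Matrix.of_apply, Fin.cons_zero, Fin.cons_succ, dotProduct]
  try ring
end

section
/- Let h_1,…,h_B ∈ ℂ^L and let k ∈ {0,…,N−1}. The matrix R[k] ∈ ℂ^{B×P}, whose b-th row equals the k-th row of F multiplied by T^(p)(h_b), has rank at most L−1. -/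
open Matrix

/-- total extension of h to ℕ -/
noncomputable def gfun {L : ℕ} (hh : Fin L → ℂ) : ℕ → ℂ :=
  fun t => if ht : t < L then hh ⟨t, ht⟩ else 0

/-- total extension of a row of dft -/
noncomputable def Fc (N : ℕ) (k : Fin N) : ℕ → ℂ :=
  fun n => if hn : n < N then dft N k ⟨n, hn⟩ else 0

lemma toepP_eq {N L P : ℕ} (hh : Fin L → ℂ) (n : Fin N) (m : Fin P) :
    toepP N P hh n m = gfun hh (P + (n : ℕ) - (m : ℕ)) := by
  have hm := m.isLt
  unfold toepP toep gfun
  simp only [of_apply]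
  split_ifs with h1 h2 h2
  · congr 1
    apply Fin.ext
    simp only
    omega
  · exfalso; omega
  · exfalso; omega
  · rfl


/-- The matrix `R[k] ∈ ℂ^{B×P}`, whose `b`-th row is the `k`-th row of `F`
multiplied by `T⁽ᵖ⁾(h_b)`, has rank at most `L - 1`. -/
theorem stmt9 (N L P B : ℕ) (hL : 1 ≤ L) (hLN : L ≤ N) (hP : L - 1 ≤ P) (hB : 1 ≤ B)
    (h : Fin B → Fin L → ℂ) (k : Fin N) :
    (Matrix.of fun (b : Fin B) (m : Fin P) =>
      Matrix.vecMul (dft N k) (toepP N P (h b)) m).rank ≤ L - 1 := by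
  set H : Matrix (Fin B) (Fin (L - 1)) ℂ :=
    Matrix.of (fun b j => gfun (h b) ((j : ℕ) + 1)) with hH
  set G : Matrix (Fin (L - 1)) (Fin P) ℂ :=
    Matrix.of (fun j m => if P ≤ (m : ℕ) + 1 + (j : ℕ)
      then Fc N k ((m : ℕ) + 1 + (j : ℕ) - P) else 0) with hG
  have key : (Matrix.of fun (b : Fin B) (m : Fin P) =>
      Matrix.vecMul (dft N k) (toepP N P (h b)) m) = H * G := by
    ext b m
    have hm := m.isLt
    set d : ℕ := P - (m : ℕ) - 1 with hd
    have hPd : P = (m : ℕ) + 1 + d := by omega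
    simp only [of_apply, Matrix.mul_apply, Matrix.vecMul, dotProduct, hH, hG]
    -- rewrite LHS sum
    have lhs_eq : ∑ n : Fin N, dft N k n * toepP N P (h b) n m
        = ∑ n ∈ Finset.range N, Fc N k n * gfun (h b) (n + d + 1) := by
      rw [← Fin.sum_univ_eq_sum_range (fun n => Fc N k n * gfun (h b) (n + d + 1)) N]
      apply Finset.sum_congr rfl
      intro n _
      rw [toepP_eq]
      congr 1
      · unfold Fc; rw [dif_pos n.isLt]
      · congr 1; omega
    rw [lhs_eq]
    -- restrict LHS to range (L - 1 - d)
    rw [show ∑ n ∈ Finset.range N, Fc N k n * gfun (h b) (n + d + 1)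
        = ∑ n ∈ Finset.range (L - 1 - d), Fc N k n * gfun (h b) (n + d + 1) by
      refine (Finset.sum_subset ?_ ?_).symm
      · exact Finset.range_subset_range.2 (by omega)
      · intro n _ hn
        rw [Finset.mem_range, not_lt] at hn
        have : ¬ (n + d + 1 < L) := by omega
        unfold gfun
        rw [dif_neg this, mul_zero]]
    -- RHS
    rw [Fin.sum_univ_eq_sum_range (fun j => gfun (h b) (j + 1) *
        (if P ≤ (m : ℕ) + 1 + j then Fc N k ((m : ℕ) + 1 + j - P) else 0)) (L - 1)]
    rw [show ∑ j ∈ Finset.range (L - 1), gfun (h b) (j + 1) *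
        (if P ≤ (m : ℕ) + 1 + j then Fc N k ((m : ℕ) + 1 + j - P) else 0)
        = ∑ j ∈ Finset.Ico d (L - 1), gfun (h b) (j + 1) *
        (if P ≤ (m : ℕ) + 1 + j then Fc N k ((m : ℕ) + 1 + j - P) else 0) by
      rw [Finset.range_eq_Ico]
      refine (Finset.sum_subset ?_ ?_).symm
      · exact Finset.Ico_subset_Ico (by omega) le_rfl
      · intro j hj hj'
        rw [Finset.mem_Ico] at hj hj'
        have : ¬ P ≤ (m : ℕ) + 1 + j := by omega
        rw [if_neg this, mul_zero]]
    rw [Finset.sum_Ico_eq_sum_range]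
    apply Finset.sum_congr rfl
    intro n _
    have hc : P ≤ (m : ℕ) + 1 + (d + n) := by omega
    rw [if_pos hc, mul_comm]
    congr 2
    · omega
    · omega
  rw [key]
  refine le_trans (Matrix.rank_mul_le_right H G) ?_
  refine le_trans (Matrix.rank_le_card_height G) ?_
  simp
end

section
/- Let h_1,…,h_B ∈ ℂ^L and let k ∈ {0,…,N−1}. The effective jammer channel matrix 𝗝[k] = [√N ĵ[k], R[k]] ∈ ℂ^{B×(P+1)} has rank at most min{B, L}, where ĵ[k] ∈ ℂ^B has entries ĵ[k]_b = (F pad(h_b))_k and R[k] ∈ ℂ^{B×P} has b-th row equal to the k-th row of F multiplied by T^(p)(h_b). -/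
open Matrix

lemma pad_lin (N L : ℕ) (hLN : L ≤ N) (h : Fin L → ℂ) (n : Fin N) :
    pad N hLN h n = ∑ l, h l * pad N hLN (fun l' => if l' = l then 1 else 0) n := by
  unfold pad
  by_cases hn : (n : ℕ) < L
  · simp [hn]
  · simp [hn]

lemma toep_lin (N L P : ℕ) (h : Fin L → ℂ) (n : Fin N) (m : Fin (N + P)) :
    toep N P h n m = ∑ l, h l * toep N P (fun l' => if l' = l then 1 else 0) n m := by
  unfold toep
  by_cases hk : 0 ≤ (P : ℤ) + (n : ℕ) - (m : ℕ) ∧ (P : ℤ) + (n : ℕ) - (m : ℕ) ≤ (L : ℤ) - 1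
  · simp [hk]
  · simp [hk]

/-- The effective jammer channel matrix `𝗝[k] = [√N ĵ[k], R[k]]` has rank
at most `min {B, L}`. -/
theorem stmt10 (N L P B : ℕ) (hL : 1 ≤ L) (hLN : L ≤ N) (hP : L - 1 ≤ P) (hB : 1 ≤ B)
    (h : Fin B → Fin L → ℂ) (k : Fin N) :
    (effJ N P B hLN h k).rank ≤ min B L := by
  have key : effJ N P B hLN h k =
      (Matrix.of h) * effJ N P L hLN (fun l l' => if l' = l then 1 else 0) k := by
    ext b m
    rw [Matrix.mul_apply]
    refine Fin.cases ?_ ?_ m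
    · simp only [effJ, Matrix.of_apply, Fin.cons_zero, Matrix.mulVec, dotProduct]
      simp_rw [pad_lin N L hLN (h b), Finset.mul_sum]
      rw [Finset.sum_comm]
      refine Finset.sum_congr rfl fun l _ => ?_
      exact Finset.sum_congr rfl fun n _ => by ring
    · intro j
      simp only [effJ, Matrix.of_apply, Fin.cons_succ, Matrix.vecMul, dotProduct, toepP]
      simp_rw [toep_lin N L P (h b), Finset.mul_sum]
      rw [Finset.sum_comm]
      refine Finset.sum_congr rfl fun l _ => ?_
      exact Finset.sum_congr rfl fun n _ => by ring
  refine le_min ?_ ?_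
  · simpa using Matrix.rank_le_card_height (effJ N P B hLN h k)
  · rw [key]
    refine (Matrix.rank_mul_le_right _ _).trans ?_
    simpa using Matrix.rank_le_card_height (effJ N P L hLN (fun l l' => if l' = l then 1 else 0) k)
end

section
/- (Theorem 1, tightness.) Suppose L ≤ B and P ≥ L−1, and choose the impulse responses h_b = e_b ∈ ℂ^L (the b-th standard basis vector) for b = 1,…,L and h_b = 0 for b = L+1,…,B. Then for every subcarrier k ∈ {0,…,N−1}, the range of the linear map Φ_k : ℂ^{N+P} → ℂ^B with (Φ_k(w))_b = (F · T(h_b) w)_k has dimension exactly L. -/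
open Matrix

/-!
The map `Φ_k` is multiplication by the matrix whose `b`-th row is the `k`-th row of `F T(h_b)`,
so the dimension of its range is the row rank of that matrix. The rows `b ≥ L` vanish. In the
remaining rows, `T(e_b)` places `F_{k, m + b - P}` in column `m`; on the last `L` columns
`m = N + P - 1 - c` this gives an upper triangular `L × L` block with diagonal `F_{k, N-1} ≠ 0`,
so these `L` rows are independent.
-/
theorem linearIndependent_of_isUpperTriangular {K ι κ : Type*} [Field K] [Fintype ι]
    [LinearOrder ι] (v : ι → κ → K) (g : ι → κ)
    (hupper : (of fun i j => v i (g j)).IsUpperTriangular) (hdiag : ∀ i, v i (g i) ≠ 0) :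
    LinearIndependent K v := by
  have hdet : (of fun i j => v i (g j)).det ≠ 0 := by
    rw [det_of_isUpperTriangular hupper]
    exact Finset.prod_ne_zero_iff.2 fun i _ => hdiag i
  exact (linearIndependent_rows_of_det_ne_zero hdet).of_comp (LinearMap.funLeft K K g)

theorem Submodule.span_range_eq_span_range_comp {R M ι κ : Type*} [Semiring R]
    [AddCommMonoid M] [Module R M] (v : ι → M) (f : κ → ι) (hv : ∀ i ∉ Set.range f, v i = 0) :
    span R (Set.range v) = span R (Set.range (v ∘ f)) := by
  refine le_antisymm (span_le.2 ?_) (span_mono (Set.range_comp_subset_range f v))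
  rintro _ ⟨i, rfl⟩
  by_cases hi : i ∈ Set.range f
  · obtain ⟨j, rfl⟩ := hi
    exact subset_span ⟨j, rfl⟩
  · rw [hv i hi]
    exact zero_mem _

theorem Matrix.finrank_span_range_mulVec {K m n : Type*} [Field K] [Fintype n]
    (A : Matrix m n K) : Module.finrank K (Submodule.span K (Set.range (A *ᵥ ·))) = A.rank := by
  change _ = Module.finrank K (LinearMap.range A.mulVecLin)
  rw [← Submodule.span_eq (LinearMap.range A.mulVecLin), LinearMap.coe_range]
  rfl

theorem dft_apply_ne_zero {N : ℕ} (k n : Fin N) : dft N k n ≠ 0 := by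
  have hN : (0 : ℝ) < N := by exact_mod_cast k.pos
  simp [dft, Complex.exp_ne_zero, hN.ne']

def basisImpulses (B L : ℕ) : Fin B → Fin L → ℂ :=
  fun b l => if (b : ℕ) = l then 1 else 0

theorem toep_basisImpulses_apply (N P : ℕ) {B L : ℕ} (b : Fin B) (n : Fin N) (m : Fin (N + P)) :
    toep N P (basisImpulses B L b) n m = if (b : ℕ) < L ∧ P + n = m + b then 1 else 0 := by
  simp only [toep, basisImpulses, of_apply]
  split_ifs <;> first | rfl | omega

noncomputable def interferenceMatrix (N P : ℕ) {L B : ℕ} (h : Fin B → Fin L → ℂ) (k : Fin N) :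
    Matrix (Fin B) (Fin (N + P)) ℂ :=
  of fun b => vecMul (dft N k) (toep N P (h b))

theorem interferenceMatrix_mulVec (N P : ℕ) {L B : ℕ} (h : Fin B → Fin L → ℂ) (k : Fin N) :
    (interferenceMatrix N P h k *ᵥ ·) = fun w b => (dft N *ᵥ (toep N P (h b) *ᵥ w)) k := by
  ext w b
  simp [interferenceMatrix, mulVec, dotProduct_mulVec]

theorem interferenceMatrix_basisImpulses_apply (P : ℕ) {N L B : ℕ} (k : Fin N) (b : Fin B)
    (m : Fin (N + P)) :
    interferenceMatrix N P (basisImpulses B L) k b m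
      = ∑ n : Fin N, if (b : ℕ) < L ∧ P + (n : ℕ) = m + b then dft N k n else 0 := by
  simp only [interferenceMatrix, of_apply, vecMul, dotProduct, toep_basisImpulses_apply, mul_ite,
    mul_one, mul_zero]

theorem rank_interferenceMatrix_basisImpulses (N P : ℕ) {L B : ℕ} (hLN : L ≤ N) (hLB : L ≤ B)
    (k : Fin N) :
    (interferenceMatrix N P (basisImpulses B L) k).rank = L := by
  set M := interferenceMatrix N P (basisImpulses B L) k
  have hM : ∀ b m, M b m = _ := interferenceMatrix_basisImpulses_apply P k
  have hzero : ∀ b ∉ Set.range (Fin.castLE hLB), M b = 0 := by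
    intro b hb
    have hbL : L ≤ b := by
      by_contra! hbL
      exact hb ⟨⟨b, hbL⟩, rfl⟩
    ext m
    simp only [hM, Pi.zero_apply]
    exact Finset.sum_eq_zero fun n _ => if_neg (by omega)
  let col (c : Fin L) : Fin (N + P) := ⟨N + P - 1 - c, by omega⟩
  have hupper : (of fun b c => M (Fin.castLE hLB b) (col c)).IsUpperTriangular := by
    intro b c hcb
    simp only [id, Fin.lt_def] at hcb
    simp only [of_apply, hM]
    exact Finset.sum_eq_zero fun n _ => if_neg (by simp [col]; omega)
  have hdiag : ∀ c : Fin L, M (Fin.castLE hLB c) (col c) ≠ 0 := by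
    intro c
    have hcond : ∀ n : Fin N, ((c : ℕ) < L ∧ P + (n : ℕ) = col c + c) ↔
        n = ⟨N - 1, Nat.sub_one_lt_of_lt k.pos⟩ := fun n => by
      simp only [col, Fin.ext_iff]
      omega
    simp only [hM, Fin.val_castLE, hcond, Finset.sum_ite_eq', Finset.mem_univ, if_true]
    exact dft_apply_ne_zero _ _
  have hindep : LinearIndependent ℂ (M.row ∘ Fin.castLE hLB) :=
    linearIndependent_of_isUpperTriangular _ col hupper hdiag
  rw [rank_eq_finrank_span_row, Submodule.span_range_eq_span_range_comp M.row _ hzero,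
    finrank_span_eq_card hindep, Fintype.card_fin]

theorem stmt14_general (N L P B : ℕ) (hLN : L ≤ N) (hLB : L ≤ B) (k : Fin N) :
    Module.finrank ℂ (Submodule.span ℂ (Set.range (fun w : Fin (N + P) → ℂ =>
        fun b : Fin B =>
          (dft N *ᵥ (toep N P (fun l : Fin L => if (b : ℕ) = (l : ℕ) then 1 else 0) *ᵥ w))
            k))) = L := by
  calc _ = (interferenceMatrix N P (basisImpulses B L) k).rank := by
        rw [← finrank_span_range_mulVec, interferenceMatrix_mulVec]
        rfl
    _ = L := rank_interferenceMatrix_basisImpulses N P hLN hLB k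

/-- **Theorem 1, tightness.** With impulse responses `h_b = e_b` for
`b = 1,…,L` and `h_b = 0` for `b = L+1,…,B` (encoded as `h b l = if b = l then 1 else 0`),
the per-subcarrier receive interference spans a subspace of dimension exactly `L`. -/
theorem stmt14 (N L P B : ℕ) (hL : 1 ≤ L) (hLN : L ≤ N) (hP : L - 1 ≤ P) (hPN : P ≤ N)
    (hLB : L ≤ B) (k : Fin N) :
    Module.finrank ℂ (Submodule.span ℂ (Set.range (fun w : Fin (N + P) → ℂ =>
        fun b : Fin B =>
          (dft N *ᵥ (toep N P (fun l : Fin L => if (b : ℕ) = (l : ℕ) then 1 else 0) *ᵥ w))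
            k))) = L :=
  stmt14_general N L P B hLN hLB k
end

section
/- (Corollary 1.) Consider an I-antenna jammer whose i-th antenna has impulse responses h_{i,1},…,h_{i,B} ∈ ℂ^{L_i} to the B receive antennas, with P ≥ L_i − 1 and L_i ≤ N for all i. For every subcarrier k ∈ {0,…,N−1}, the subspace of ℂ^B spanned by the per-subcarrier receive interference vectors, i.e., the range of the linear map Ψ_k : (ℂ^{N+P})^I → ℂ^B with (Ψ_k(w_1,…,w_I))_b = Σ_{i=1}^{I} (F · T_{L_i}(h_{i,b}) w_i)_k, has dimension at most min{B, Σ_{i=1}^{I} L_i}. -/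
open Matrix

lemma toep_eq_sum (N : ℕ) {L : ℕ} (P : ℕ) (h : Fin L → ℂ) (n : Fin N) (m : Fin (N + P)) :
    toep N P h n m = ∑ l : Fin L, if ((P : ℤ) + (n : ℕ) - (m : ℕ) = (l : ℕ)) then h l else 0 := by
  unfold toep
  simp only [Matrix.of_apply]
  split_ifs with hk
  · obtain ⟨h1, h2⟩ := hk
    have hlt : ((P : ℤ) + (n : ℕ) - (m : ℕ)).toNat < L := by omega
    set l0 : Fin L := ⟨((P : ℤ) + (n : ℕ) - (m : ℕ)).toNat, hlt⟩ with hl0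
    have : ∀ l : Fin L, ((P : ℤ) + (n : ℕ) - (m : ℕ) = (l : ℕ)) ↔ l = l0 := by
      intro l
      constructor
      · intro he; apply Fin.ext; simp [hl0]; omega
      · intro he; subst he; simp [hl0]; omega
    simp_rw [this]
    simp [Finset.sum_ite_eq']
  · apply (Finset.sum_eq_zero ?_).symm
    intro l _
    rw [if_neg]
    have := l.isLt
    omega
lemma key_s16 (N : ℕ) {L : ℕ} (P : ℕ) (h : Fin L → ℂ) (k : Fin N) (w : Fin (N + P) → ℂ) :
    (dft N *ᵥ (toep N P h *ᵥ w)) k =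
      ∑ l : Fin L, (∑ n : Fin N, ∑ m : Fin (N + P), if ((P : ℤ) + (n : ℕ) - (m : ℕ) = (l : ℕ))
        then dft N k n * w m else 0) * h l := by
  simp only [mulVec, dotProduct, toep_eq_sum, Finset.sum_mul, Finset.mul_sum]
  rw [show (∑ l : Fin L, ∑ n : Fin N, ∑ m : Fin (N+P), (if ((P : ℤ) + (n : ℕ) - (m : ℕ) = (l : ℕ)) then dft N k n * w m else 0) * h l)
      = ∑ n : Fin N, ∑ l : Fin L, ∑ m : Fin (N+P), (if ((P : ℤ) + (n : ℕ) - (m : ℕ) = (l : ℕ)) then dft N k n * w m else 0) * h l from Finset.sum_comm]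
  refine Finset.sum_congr rfl fun n _ => ?_
  rw [Finset.sum_comm]
  refine Finset.sum_congr rfl fun m _ => ?_
  refine Finset.sum_congr rfl fun l _ => ?_
  split_ifs <;> ring


/-- **Corollary 1.** For an `I`-antenna jammer whose `i`-th antenna has
`L_i` channel taps, the per-subcarrier receive interference spans a subspace of dimension
at most `min {B, Σ_i L_i}`. -/
theorem stmt16 (N P B I : ℕ) (hN : 1 ≤ N) (hB : 1 ≤ B) (hI : 1 ≤ I)
    (L : Fin I → ℕ) (hL : ∀ i, 1 ≤ L i) (hLN : ∀ i, L i ≤ N) (hP : ∀ i, L i - 1 ≤ P)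
    (h : (i : Fin I) → Fin B → Fin (L i) → ℂ) (k : Fin N) :
    Module.finrank ℂ (Submodule.span ℂ (Set.range (fun w : Fin I → (Fin (N + P) → ℂ) =>
        fun b : Fin B => ∑ i, (dft N *ᵥ (toep N P (h i b) *ᵥ w i)) k)))
      ≤ min B (∑ i, L i) := by
  classical
  refine le_min ?_ ?_
  · calc Module.finrank ℂ (Submodule.span ℂ _) ≤ Module.finrank ℂ (Fin B → ℂ) :=
          Submodule.finrank_le _
      _ = B := by simp
  · set v : ((i : Fin I) × Fin (L i)) → (Fin B → ℂ) := fun p b => h p.1 b p.2 with hv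
    have hsub : Submodule.span ℂ (Set.range (fun w : Fin I → (Fin (N + P) → ℂ) =>
        fun b : Fin B => ∑ i, (dft N *ᵥ (toep N P (h i b) *ᵥ w i)) k)) ≤
        Submodule.span ℂ (Set.range v) := by
      rw [Submodule.span_le]
      rintro x ⟨w, rfl⟩
      have hx : (fun b : Fin B => ∑ i, (dft N *ᵥ (toep N P (h i b) *ᵥ w i)) k) =
          ∑ p : (i : Fin I) × Fin (L i),
            (∑ n : Fin N, ∑ m : Fin (N + P),
              if ((P : ℤ) + (n : ℕ) - (m : ℕ) = (p.2 : ℕ)) then dft N k n * w p.1 m else 0) • v p := by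
        funext b
        simp only [Finset.sum_apply, Pi.smul_apply, smul_eq_mul, hv]
        rw [← Finset.univ_sigma_univ, Finset.sum_sigma]
        exact Finset.sum_congr rfl fun i _ => key_s16 N P (h i b) k (w i)
      dsimp only
      rw [hx]
      exact Submodule.sum_mem _ fun p _ =>
        Submodule.smul_mem _ _ (Submodule.subset_span (Set.mem_range_self p))
    calc Module.finrank ℂ (Submodule.span ℂ _) ≤
          Module.finrank ℂ (Submodule.span ℂ (Set.range v)) := Submodule.finrank_mono hsub
      _ ≤ Fintype.card ((i : Fin I) × Fin (L i)) := finrank_range_le_card v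
      _ = ∑ i, L i := by simp
end
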